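/- Let f : ℝⁿ → ℝ ∪ {±∞} be finite at x̄ and h ∈ ℝⁿ, and assume f is calm at x̄ in direction h. Then ∂_a f(x̄; h) = ⋃_{ν ∈ Df(x̄)(h)} ∂f(x̄; (h, ν)) = {x* : (x*, −1) ∈ ⋃_{ν ∈ Df(x̄)(h)} N_{epi f}((x̄, f(x̄)); (h, ν))}. If, in addition, f is directionally differentiable at x̄ in direction h, then Df(x̄)(h) = {f′(x̄; h)} and ∂_a f(x̄; h) = ∂f(x̄; (h, f′(x̄; h))). -/

import Mathlib

/-
For `f(y)` finite, `ξ` is a regular subgradient of `f` at `y` exactly when `(ξ, -1)` is a regular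
normal to `epi f` at `(y, f y)`, and a regular normal `(ξ, η)` with `η < 0` to the epigraph at
`(y, α)` forces `α = f y`. Hence a sequence realising `∂f(x; (h, ν))` can be rescaled to height
`-1` and yields regular subgradients at `x + t_k h_k` with `f(x + t_k h_k) = f x + t_k ν_k → f x`,
an element of `∂_a f(x; h)`. Conversely, along a sequence realising `∂_a f(x; h)` calmness bounds
the difference quotients `ν_k = (f(x + t_k h_k) - f x) / t_k`; a convergent subsequence `ν_k → ν`
exhibits `ν ∈ Df(x)(h)` and the same subgradients as normals realising `∂f(x; (h, ν))`. Under
directional differentiability every such `ν` is the limit `f'(x; h)` of difference quotients.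
-/

open Filter Topology Set Pointwise

noncomputable section

namespace Paper

variable {E : Type*} [NormedAddCommGroup E] [InnerProductSpace ℝ E]
variable {F : Type*} [NormedAddCommGroup F] [InnerProductSpace ℝ F]

/-- The set `V_{ρ,δ}(u)`. -/
def dirNbhdBase (u : E) (ρ δ : ℝ) : Set E :=
  {z | ‖z‖ ≤ ρ ∧ ‖‖u‖ • z - ‖z‖ • u‖ ≤ δ * ‖z‖ * ‖u‖}

/-- `V` is a directional neighborhood of the direction `u`. -/
def IsDirNbhd (V : Set E) (u : E) : Prop :=
  ∃ ρ > (0:ℝ), ∃ δ > (0:ℝ), dirNbhdBase u ρ δ ⊆ V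

/-- Tangent (contingent/Bouligand) cone to `Ω` at `x`. -/
def tangentCone (Ω : Set E) (x : E) : Set E :=
  {u | ∃ (uk : ℕ → E) (tk : ℕ → ℝ), Tendsto uk atTop (𝓝 u) ∧ (∀ k, 0 < tk k) ∧
    Tendsto tk atTop (𝓝 0) ∧ ∀ k, x + tk k • uk k ∈ Ω}

/-- Fréchet (regular) normal cone to `Ω` at `x` (empty if `x ∉ Ω`). -/
def frechetNC (Ω : Set E) (x : E) : Set E :=
  {ξ | x ∈ Ω ∧ ∀ ε > (0:ℝ), ∀ᶠ y in 𝓝[Ω] x, (inner ℝ ξ (y - x) : ℝ) ≤ ε * ‖y - x‖}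

/-- Limiting (Mordukhovich) normal cone to `Ω` at `x`. -/
def limitingNC (Ω : Set E) (x : E) : Set E :=
  {ξ | ∃ (xk ξk : ℕ → E), (∀ k, xk k ∈ Ω) ∧ Tendsto xk atTop (𝓝 x) ∧
    Tendsto ξk atTop (𝓝 ξ) ∧ ∀ k, ξk k ∈ frechetNC Ω (xk k)}

/-- Directional limiting normal cone to `Ω` at `x` in direction `u`. -/
def dirNC (Ω : Set E) (x : E) (u : E) : Set E :=
  {ξ | ∃ (tk : ℕ → ℝ) (uk ξk : ℕ → E), (∀ k, 0 < tk k) ∧ Tendsto tk atTop (𝓝 0) ∧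
    Tendsto uk atTop (𝓝 u) ∧ Tendsto ξk atTop (𝓝 ξ) ∧
    ∀ k, ξk k ∈ frechetNC Ω (x + tk k • uk k)}

/-- The product `E × F` equipped with the (Euclidean) `ℓ²`-structure. -/
abbrev P2 (E F : Type*) := WithLp 2 (E × F)

/-- Pairing constructor for `P2`. -/
def mk2 {E F : Type*} (x : E) (y : F) : P2 E F := (WithLp.equiv 2 (E × F)).symm (x, y)

/-- Graph of a single-valued mapping. -/
def graphFun (φ : E → F) : Set (P2 E F) := {p | ∃ x, p = mk2 x (φ x)}

/-- Graph of a multifunction. -/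
def graphMulti (M : E → Set F) : Set (P2 E F) := {p | ∃ x y, p = mk2 x y ∧ y ∈ M x}

/-- Graphical derivative of a single-valued mapping. -/
def gderiv (φ : E → F) (x : E) (u : E) : Set F :=
  {v | mk2 u v ∈ tangentCone (graphFun φ) (mk2 x (φ x))}

/-- Graphical derivative of a multifunction at `(x, y)`. -/
def gderivM (M : E → Set F) (x : E) (y : F) (u : E) : Set F :=
  {v | mk2 u v ∈ tangentCone (graphMulti M) (mk2 x y)}

/-- Directional limiting coderivative of a single-valued mapping:
`D*φ(x;(u,v))(η)`. -/
def dirCoderiv (φ : E → F) (x : E) (u : E) (v : F) (η : F) : Set E :=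
  {ξ | mk2 ξ (-η) ∈ dirNC (graphFun φ) (mk2 x (φ x)) (mk2 u v)}

/-- Metric subregularity of the multifunction `M` at `(x, y) ∈ Gr M` in direction `u`. -/
def DirMetrSubreg (M : E → Set F) (x : E) (y : F) (u : E) : Prop :=
  ∃ κ > (0:ℝ), ∃ V : Set E, IsDirNbhd V u ∧
    ∀ x', x' - x ∈ V → Metric.infDist x' {z | y ∈ M z} ≤ κ * Metric.infDist y (M x')

/-- Calmness of a single-valued mapping at `x` in direction `u`. -/
def DirCalm (φ : E → F) (x : E) (u : E) : Prop :=
  ∃ κ > (0:ℝ), ∃ V : Set E, IsDirNbhd V u ∧ ∀ x', x' - x ∈ V → ‖φ x' - φ x‖ ≤ κ * ‖x' - x‖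

/-- Lipschitz continuity of a single-valued mapping near `x` in direction `u`. -/
def DirLipschitz (φ : E → F) (x : E) (u : E) : Prop :=
  ∃ κ > (0:ℝ), ∃ V : Set E, IsDirNbhd V u ∧
    ∀ x₁ x₂, x₁ - x ∈ V → x₂ - x ∈ V → ‖φ x₁ - φ x₂‖ ≤ κ * ‖x₁ - x₂‖

/-- Inner semicompactness of `S` at `y` w.r.t. `Ω` in direction `v`. -/
def DirInnerSemicompact (S : F → Set E) (y : F) (Ω : Set F) (v : F) : Prop :=
  ∀ (t : ℕ → ℝ) (vk : ℕ → F), (∀ k, 0 < t k) → Tendsto t atTop (𝓝 0) →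
    Tendsto vk atTop (𝓝 v) → (∀ k, y + t k • vk k ∈ Ω) →
    ∃ (K : ℕ → ℕ) (xk : ℕ → E) (x : E), StrictMono K ∧
      (∀ k, xk k ∈ S (y + t (K k) • vk (K k))) ∧ Tendsto xk atTop (𝓝 x)

/-- Inner calmness of `S` at `(y, x) ∈ Gr S` w.r.t. `Ω` in direction `v`. -/
def DirInnerCalm (S : F → Set E) (y : F) (x : E) (Ω : Set F) (v : F) : Prop :=
  ∃ κ > (0:ℝ), ∃ V : Set F, IsDirNbhd V v ∧
    ∀ y', y' - y ∈ V → y' ∈ Ω → ∃ x' ∈ S y', ‖x - x'‖ ≤ κ * ‖y' - y‖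

/-- Epigraph of an extended-real-valued function, as a subset of `E ×₂ ℝ`. -/
def epiE (f : E → EReal) : Set (P2 E ℝ) := {p | ∃ (x : E) (α : ℝ), p = mk2 x α ∧ f x ≤ (α : EReal)}

/-- Graph of an extended-real-valued function, as a subset of `E ×₂ ℝ`. -/
def graphE (f : E → EReal) : Set (P2 E ℝ) := {p | ∃ (x : E) (α : ℝ), p = mk2 x α ∧ f x = (α : EReal)}

/-- Graphical derivative `Df(x)(h)` of an extended-real-valued function. -/
def gderivE (f : E → EReal) (x : E) (h : E) : Set ℝ :=
  {ν | mk2 h ν ∈ tangentCone (graphE f) (mk2 x (f x).toReal)}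

/-- Directional limiting subdifferential `∂f(x;(h,ν))`. -/
def dirSubdiff (f : E → EReal) (x : E) (h : E) (ν : ℝ) : Set E :=
  {ξ | mk2 ξ (-1 : ℝ) ∈ dirNC (epiE f) (mk2 x (f x).toReal) (mk2 h ν)}

/-- Directional singular limiting subdifferential `∂^∞ f(x;(h,ν))`. -/
def dirSingSubdiff (f : E → EReal) (x : E) (h : E) (ν : ℝ) : Set E :=
  {ξ | mk2 ξ (0 : ℝ) ∈ dirNC (epiE f) (mk2 x (f x).toReal) (mk2 h ν)}

/-- Fréchet (regular) subdifferential `∂̂f(x)`. -/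
def regSubdiff (f : E → EReal) (x : E) : Set E :=
  {ξ | ∀ ε > (0:ℝ), ∀ᶠ y in 𝓝 x,
    f x + ((((inner ℝ ξ (y - x) : ℝ)) - ε * ‖y - x‖ : ℝ) : EReal) ≤ f y}

/-- Analytic directional limiting subdifferential `∂ₐf(x;h)`. -/
def aDirSubdiff (f : E → EReal) (x : E) (h : E) : Set E :=
  {ξ | ∃ (t : ℕ → ℝ) (hk ξk : ℕ → E), (∀ k, 0 < t k) ∧ Tendsto t atTop (𝓝 0) ∧
    Tendsto hk atTop (𝓝 h) ∧ Tendsto ξk atTop (𝓝 ξ) ∧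
    Tendsto (fun k => f (x + t k • hk k)) atTop (𝓝 (f x)) ∧
    ∀ k, ξk k ∈ regSubdiff f (x + t k • hk k)}

/-- Domain of an extended-real-valued function. -/
def domE (f : E → EReal) : Set E := {x | f x ≠ ⊤ ∧ f x ≠ ⊥}

/-- Calmness of an extended-real-valued function at `x` in direction `h`
(understood w.r.t. its domain). -/
def DirCalmE (f : E → EReal) (x : E) (h : E) : Prop :=
  ∃ κ > (0:ℝ), ∃ V : Set E, IsDirNbhd V h ∧
    ∀ x', x' - x ∈ V → x' ∈ domE f → |(f x').toReal - (f x).toReal| ≤ κ * ‖x' - x‖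

/-- The set `N_{epi f}((x, f(x)); (h, ±∞))`; use `L = atTop` for `+∞` and `L = atBot` for `-∞`. -/
def NepiInfty (f : E → EReal) (x : E) (h : E) (L : Filter ℝ) : Set (P2 E ℝ) :=
  {q | ∃ (t νs : ℕ → ℝ) (hk : ℕ → E) (qk : ℕ → P2 E ℝ),
    (∀ k, 0 < t k) ∧ Tendsto t atTop (𝓝 0) ∧ Tendsto hk atTop (𝓝 h) ∧
    Tendsto νs atTop L ∧ Tendsto (fun k => t k * νs k) atTop (𝓝 0) ∧
    Tendsto qk atTop (𝓝 q) ∧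
    ∀ k, qk k ∈ frechetNC (epiE f) (mk2 x (f x).toReal + t k • mk2 (hk k) (νs k))}

/-- Directional differentiability: `f′(x;h) = d` as a limit over `t ↓ 0`, `h′ → h`. -/
def HasDirDeriv (f : E → EReal) (x : E) (h : E) (d : ℝ) : Prop :=
  Tendsto (fun p : ℝ × E => ((p.1⁻¹ : ℝ) : EReal) * (f (x + p.1 • p.2) - f x))
    ((𝓝[>] (0:ℝ)) ×ˢ 𝓝 h) (𝓝 (d : EReal))

abbrev Euc (n : ℕ) := EuclideanSpace ℝ (Fin n)

section Pairing

variable {α β : Type*}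

@[simp] lemma mk2_fst (a : α) (b : β) : (mk2 a b).fst = a := rfl

@[simp] lemma mk2_snd (a : α) (b : β) : (mk2 a b).snd = b := rfl

lemma mk2_fst_snd (q : P2 α β) : mk2 q.fst q.snd = q := rfl

lemma mk2_injective {a a' : α} {b b' : β} (h : mk2 a b = mk2 a' b') : a = a' ∧ b = b' :=
  ⟨congrArg WithLp.fst h, congrArg WithLp.snd h⟩

lemma mk2_add_smul [AddCommGroup α] [Module ℝ α] (x : α) (a t : ℝ) (u : P2 α ℝ) :
    mk2 x a + t • u = mk2 (x + t • u.fst) (a + t * u.snd) := rfl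

lemma smul_mk2 [AddCommGroup α] [Module ℝ α] (c : ℝ) (a : α) (b : ℝ) :
    c • mk2 a b = mk2 (c • a) (c * b) := rfl

lemma mk2_sub_mk2 [AddCommGroup α] [AddCommGroup β] (a a' : α) (b b' : β) :
    mk2 a b - mk2 a' b' = mk2 (a - a') (b - b') := rfl

lemma inner_mk2_mk2 [NormedAddCommGroup α] [InnerProductSpace ℝ α] (a a' : α) (b b' : ℝ) :
    inner ℝ (mk2 a b) (mk2 a' b') = inner ℝ a a' + b * b' := by
  rw [WithLp.prod_inner_apply, RCLike.inner_apply', conj_trivial]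
  rfl

lemma norm_mk2_le [SeminormedAddCommGroup α] [SeminormedAddCommGroup β] (a : α) (b : β) :
    ‖mk2 a b‖ ≤ ‖a‖ + ‖b‖ := by
  have hsplit : mk2 a b = mk2 a 0 + mk2 0 b := by simp [mk2, ← WithLp.toLp_add]
  calc ‖mk2 a b‖ ≤ ‖mk2 a (0 : β)‖ + ‖mk2 (0 : α) b‖ := hsplit ▸ norm_add_le _ _
    _ = ‖a‖ + ‖b‖ := by
      change ‖WithLp.toLp 2 (a, (0 : β))‖ + ‖WithLp.toLp 2 ((0 : α), b)‖ = _
      rw [WithLp.norm_toLp_fst, WithLp.norm_toLp_snd]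

lemma tendsto_mk2 [TopologicalSpace α] [TopologicalSpace β] {ι : Type*} {l : Filter ι}
    {a : ι → α} {b : ι → β} {a₀ : α} {b₀ : β} (ha : Tendsto a l (𝓝 a₀))
    (hb : Tendsto b l (𝓝 b₀)) : Tendsto (fun i => mk2 (a i) (b i)) l (𝓝 (mk2 a₀ b₀)) :=
  ((WithLp.prod_continuous_toLp 2 α β).tendsto _).comp (ha.prodMk_nhds hb)

end Pairing

lemma smul_mem_frechetNC {Ω : Set E} {x ξ : E} {c : ℝ} (hc : 0 < c) (hξ : ξ ∈ frechetNC Ω x) :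
    c • ξ ∈ frechetNC Ω x := by
  refine ⟨hξ.1, fun ε hε => ?_⟩
  filter_upwards [hξ.2 (ε / c) (div_pos hε hc)] with y hy
  calc inner ℝ (c • ξ) (y - x) = c * inner ℝ ξ (y - x) := real_inner_smul_left _ _ _
    _ ≤ c * (ε / c * ‖y - x‖) := mul_le_mul_of_nonneg_left hy hc.le
    _ = ε * ‖y - x‖ := by field_simp

section Epigraph

variable {f : E → EReal} {y ξ : E} {α : ℝ}

omit [NormedAddCommGroup E] [InnerProductSpace ℝ E] in
lemma mk2_mem_epiE : mk2 y α ∈ epiE f ↔ f y ≤ α := by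
  refine ⟨fun ⟨z, β, hp, hle⟩ => ?_, fun hle => ⟨y, α, rfl, hle⟩⟩
  obtain ⟨rfl, rfl⟩ := mk2_injective hp
  exact hle

omit [NormedAddCommGroup E] [InnerProductSpace ℝ E] in
lemma mk2_mem_graphE : mk2 y α ∈ graphE f ↔ f y = α := by
  refine ⟨fun ⟨z, β, hp, heq⟩ => ?_, fun heq => ⟨y, α, rfl, heq⟩⟩
  obtain ⟨rfl, rfl⟩ := mk2_injective hp
  exact heq

lemma mk2_neg_one_mem_frechetNC_epiE_of_mem_regSubdiff (hy : f y = α)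
    (hξ : ξ ∈ regSubdiff f y) : mk2 ξ (-1 : ℝ) ∈ frechetNC (epiE f) (mk2 y α) := by
  refine ⟨mk2_mem_epiE.2 hy.le, fun ε hε => ?_⟩
  have hfst : Tendsto WithLp.fst (𝓝[epiE f] (mk2 y α)) (𝓝 y) :=
    ((WithLp.continuous_fst 2 E ℝ).tendsto _).mono_left nhdsWithin_le_nhds
  filter_upwards [hfst.eventually (hξ ε hε), self_mem_nhdsWithin] with q hq hqepi
  obtain ⟨z, β, rfl, hle⟩ := hqepi
  have hlow : α + (inner ℝ ξ (z - y) - ε * ‖z - y‖) ≤ β := by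
    rw [← EReal.coe_le_coe_iff, EReal.coe_add, ← hy]
    exact hq.trans hle
  have hnorm : ε * ‖z - y‖ ≤ ε * ‖mk2 (z - y) (β - α)‖ :=
    mul_le_mul_of_nonneg_left (WithLp.norm_fst_le E (mk2 (z - y) (β - α))) hε.le
  rw [mk2_sub_mk2, inner_mk2_mk2]
  linarith

lemma eq_of_mk2_neg_one_mem_frechetNC_epiE (hξ : mk2 ξ (-1 : ℝ) ∈ frechetNC (epiE f) (mk2 y α)) :
    f y = α := by
  refine (mk2_mem_epiE.1 hξ.1).eq_of_not_lt fun hlt => ?_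
  obtain ⟨γ, hfγ, hγα⟩ := EReal.lt_iff_exists_real_btwn.1 hlt
  have hγα : γ < α := EReal.coe_lt_coe_iff.1 hγα
  -- The epigraph contains `(y, α - s)` for small `s > 0`, and the step `(0, -s)` has inner product
  -- `s` with `(ξ, -1)`.
  have hdown : Tendsto (fun s => mk2 y (α - s)) (𝓝[>] 0) (𝓝[epiE f] (mk2 y α)) := by
    refine tendsto_nhdsWithin_iff.2 ⟨?_, ?_⟩
    · have hα : Tendsto (fun s : ℝ => α - s) (𝓝 0) (𝓝 α) :=
        (continuous_const.sub continuous_id).tendsto' 0 α (sub_zero α)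
      exact (tendsto_mk2 tendsto_const_nhds hα).mono_left nhdsWithin_le_nhds
    · filter_upwards [Ioo_mem_nhdsGT (sub_pos.2 hγα)] with s hs
      exact mk2_mem_epiE.2 (hfγ.le.trans (EReal.coe_le_coe_iff.2 (by linarith [hs.2])))
  obtain ⟨s, hs, hspos⟩ := ((hdown.eventually (hξ.2 (1 / 2) one_half_pos)).and
    self_mem_nhdsWithin).exists
  have hnorm : ‖mk2 (0 : E) (-s)‖ ≤ s := by
    simpa [abs_of_pos hspos] using norm_mk2_le (0 : E) (-s)
  rw [mk2_sub_mk2, sub_self, sub_sub_cancel_left, inner_mk2_mk2, inner_zero_right] at hs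
  linarith

lemma mem_regSubdiff_of_mk2_neg_one_mem_frechetNC_epiE
    (hξ : mk2 ξ (-1 : ℝ) ∈ frechetNC (epiE f) (mk2 y α)) : ξ ∈ regSubdiff f y := by
  have hy := eq_of_mk2_neg_one_mem_frechetNC_epiE hξ
  intro ε hε
  set C := 1 + ‖ξ‖ + ε
  have hC : 0 < C := by positivity
  set r : E → ℝ := fun z => inner ℝ ξ (z - y) - ε * ‖z - y‖
  -- If `f z` lay below the affine minorant, the point `(z, α + r z)` of the epigraph would violate
  -- the normal-cone inequality with tolerance `ε / (2 C)`.
  have hlift : Tendsto (fun z => mk2 z (α + r z)) (𝓝 y) (𝓝 (mk2 y α)) := by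
    have hr : Continuous r := by fun_prop
    simpa [r] using tendsto_mk2 tendsto_id (tendsto_const_nhds.add (hr.tendsto y))
  have hnc := hlift.eventually (eventually_nhdsWithin_iff.1 (hξ.2 (ε / (2 * C)) (by positivity)))
  filter_upwards [hnc] with z hz
  rw [hy, ← EReal.coe_add]
  by_contra hlt
  have hineq : inner ℝ ξ (z - y) - r z ≤ ε / (2 * C) * ‖mk2 (z - y) (r z)‖ := by
    have := hz (mk2_mem_epiE.2 (not_le.1 hlt).le)
    rw [mk2_sub_mk2, inner_mk2_mk2, add_sub_cancel_left] at this
    linarith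
  have hgap : inner ℝ ξ (z - y) - r z = ε * ‖z - y‖ := by simp only [r]; ring
  have hr_le : |r z| ≤ (‖ξ‖ + ε) * ‖z - y‖ := by
    have := abs_real_inner_le_norm ξ (z - y)
    rw [abs_le] at this ⊢
    constructor <;> nlinarith [norm_nonneg (z - y)]
  have hnorm := norm_mk2_le (z - y) (r z)
  rw [Real.norm_eq_abs] at hnorm
  have hbound : ε / (2 * C) * ‖mk2 (z - y) (r z)‖ ≤ ε / 2 * ‖z - y‖ := by
    calc ε / (2 * C) * ‖mk2 (z - y) (r z)‖ ≤ ε / (2 * C) * (C * ‖z - y‖) := by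
          gcongr
          linarith
      _ = ε / 2 * ‖z - y‖ := by field_simp
  have hzy : ‖z - y‖ = 0 := by nlinarith [norm_nonneg (z - y)]
  rw [norm_eq_zero, sub_eq_zero] at hzy
  subst hzy
  simp [hy] at hlt

theorem mk2_neg_one_mem_frechetNC_epiE_iff :
    mk2 ξ (-1 : ℝ) ∈ frechetNC (epiE f) (mk2 y α) ↔ f y = α ∧ ξ ∈ regSubdiff f y :=
  ⟨fun hξ => ⟨eq_of_mk2_neg_one_mem_frechetNC_epiE hξ,
      mem_regSubdiff_of_mk2_neg_one_mem_frechetNC_epiE hξ⟩,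
    fun ⟨hy, hξ⟩ => mk2_neg_one_mem_frechetNC_epiE_of_mem_regSubdiff hy hξ⟩

end Epigraph

section Sequences

lemma mem_tangentCone_of_eventually {Ω : Set E} {x u : E} {uk : ℕ → E} {t : ℕ → ℝ}
    (hu : Tendsto uk atTop (𝓝 u)) (ht0 : ∀ᶠ k in atTop, 0 < t k) (ht : Tendsto t atTop (𝓝 0))
    (hmem : ∀ᶠ k in atTop, x + t k • uk k ∈ Ω) : u ∈ tangentCone Ω x := by
  obtain ⟨N, hN⟩ := eventually_atTop.1 (ht0.and hmem)
  have hshift := tendsto_add_atTop_nat N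
  exact ⟨fun k => uk (k + N), fun k => t (k + N), hu.comp hshift,
    fun k => (hN _ (Nat.le_add_left N k)).1, ht.comp hshift,
    fun k => (hN _ (Nat.le_add_left N k)).2⟩

lemma mem_dirNC_of_eventually {Ω : Set E} {x u ξ : E} {t : ℕ → ℝ} {uk ξk : ℕ → E}
    (ht0 : ∀ᶠ k in atTop, 0 < t k) (ht : Tendsto t atTop (𝓝 0)) (hu : Tendsto uk atTop (𝓝 u))
    (hξ : Tendsto ξk atTop (𝓝 ξ)) (hmem : ∀ᶠ k in atTop, ξk k ∈ frechetNC Ω (x + t k • uk k)) :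
    ξ ∈ dirNC Ω x u := by
  obtain ⟨N, hN⟩ := eventually_atTop.1 (ht0.and hmem)
  have hshift := tendsto_add_atTop_nat N
  exact ⟨fun k => t (k + N), fun k => uk (k + N), fun k => ξk (k + N),
    fun k => (hN _ (Nat.le_add_left N k)).1, ht.comp hshift, hu.comp hshift, hξ.comp hshift,
    fun k => (hN _ (Nat.le_add_left N k)).2⟩

lemma mem_aDirSubdiff_of_eventually {f : E → EReal} {x h ξ : E} {t : ℕ → ℝ} {hk ξk : ℕ → E}
    (ht0 : ∀ᶠ k in atTop, 0 < t k) (ht : Tendsto t atTop (𝓝 0)) (hh : Tendsto hk atTop (𝓝 h))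
    (hξ : Tendsto ξk atTop (𝓝 ξ)) (hf : Tendsto (fun k => f (x + t k • hk k)) atTop (𝓝 (f x)))
    (hmem : ∀ᶠ k in atTop, ξk k ∈ regSubdiff f (x + t k • hk k)) : ξ ∈ aDirSubdiff f x h := by
  obtain ⟨N, hN⟩ := eventually_atTop.1 (ht0.and hmem)
  have hshift := tendsto_add_atTop_nat N
  exact ⟨fun k => t (k + N), fun k => hk (k + N), fun k => ξk (k + N),
    fun k => (hN _ (Nat.le_add_left N k)).1, ht.comp hshift, hh.comp hshift, hξ.comp hshift,
    hf.comp hshift, fun k => (hN _ (Nat.le_add_left N k)).2⟩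

lemma mem_gderivE_of_eventually {f : E → EReal} {x h : E} {t ν : ℕ → ℝ} {hk : ℕ → E} {ν₀ : ℝ}
    (ht0 : ∀ᶠ k in atTop, 0 < t k) (ht : Tendsto t atTop (𝓝 0)) (hh : Tendsto hk atTop (𝓝 h))
    (hν : Tendsto ν atTop (𝓝 ν₀))
    (hgraph : ∀ᶠ k in atTop, f (x + t k • hk k) = ((f x).toReal + t k * ν k : ℝ)) :
    ν₀ ∈ gderivE f x h :=
  mem_tangentCone_of_eventually (tendsto_mk2 hh hν) ht0 ht
    (hgraph.mono fun k hk => by rw [mk2_add_smul]; exact mk2_mem_graphE.2 hk)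

end Sequences

lemma IsDirNbhd.eventually_smul_mem {V : Set E} {h : E} (hV : IsDirNbhd V h) {ι : Type*}
    {l : Filter ι} {t : ι → ℝ} {hk : ι → E} (ht0 : ∀ᶠ i in l, 0 < t i)
    (ht : Tendsto t l (𝓝 0)) (hh : Tendsto hk l (𝓝 h)) : ∀ᶠ i in l, t i • hk i ∈ V := by
  obtain ⟨ρ, hρ, δ, hδ, hsub⟩ := hV
  have hsmall : ∀ᶠ i in l, ‖t i • hk i‖ < ρ := by
    have : Tendsto (fun i => t i • hk i) l (𝓝 0) := by
      have : Tendsto (fun i => t i • hk i) l (𝓝 ((0 : ℝ) • h)) := ht.smul hh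
      rwa [zero_smul] at this
    exact this.norm.eventually_lt_const (by simpa using hρ)
  -- The cone condition is positively homogeneous, so it suffices to check it for `hk i` itself,
  -- where it holds strictly in the limit `hk i = h` (when `h ≠ 0`).
  have hangle : ∀ᶠ i in l, ‖‖h‖ • hk i - ‖hk i‖ • h‖ ≤ δ * ‖hk i‖ * ‖h‖ := by
    rcases eq_or_ne h 0 with rfl | hne
    · simp
    have hlhs : Tendsto (fun i => ‖‖h‖ • hk i - ‖hk i‖ • h‖) l (𝓝 0) := by
      have hg : Continuous fun z : E => ‖‖h‖ • z - ‖z‖ • h‖ := by fun_prop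
      simpa [Function.comp_def] using (hg.tendsto h).comp hh
    have hrhs : Tendsto (fun i => δ * ‖hk i‖ * ‖h‖) l (𝓝 (δ * ‖h‖ * ‖h‖)) :=
      (tendsto_const_nhds.mul hh.norm).mul tendsto_const_nhds
    have hpos : 0 < δ * ‖h‖ * ‖h‖ := by have := norm_pos_iff.2 hne; positivity
    exact (hlhs.eventually_lt hrhs hpos).mono fun i hi => hi.le
  filter_upwards [ht0, hsmall, hangle] with i hti hρi hδi
  refine hsub ⟨hρi.le, ?_⟩
  have hnorm : ‖t i • hk i‖ = t i * ‖hk i‖ := by rw [norm_smul, Real.norm_of_nonneg hti.le]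
  calc ‖‖h‖ • (t i • hk i) - ‖t i • hk i‖ • h‖ = t i * ‖‖h‖ • hk i - ‖hk i‖ • h‖ := by
        rw [hnorm, mul_smul, smul_comm, ← smul_sub, norm_smul, Real.norm_of_nonneg hti.le]
    _ ≤ t i * (δ * ‖hk i‖ * ‖h‖) := mul_le_mul_of_nonneg_left hδi hti.le
    _ = δ * ‖t i • hk i‖ * ‖h‖ := by rw [hnorm]; ring

lemma DirCalmE.eventually_abs_sub_le {f : E → EReal} {x h : E} (hcalm : DirCalmE f x h)
    {ι : Type*} {l : Filter ι} {t : ι → ℝ} {hk : ι → E} (ht0 : ∀ᶠ i in l, 0 < t i)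
    (ht : Tendsto t l (𝓝 0)) (hh : Tendsto hk l (𝓝 h)) :
    ∃ C, ∀ᶠ i in l, x + t i • hk i ∈ domE f →
      |(f (x + t i • hk i)).toReal - (f x).toReal| ≤ C * t i := by
  obtain ⟨κ, hκ, V, hV, hbound⟩ := hcalm
  refine ⟨κ * (‖h‖ + 1), ?_⟩
  have hhk : ∀ᶠ i in l, ‖hk i‖ < ‖h‖ + 1 := hh.norm.eventually_lt_const (lt_add_one _)
  filter_upwards [ht0, hV.eventually_smul_mem ht0 ht hh, hhk] with i hti hVi hhi hdom
  calc |(f (x + t i • hk i)).toReal - (f x).toReal| ≤ κ * ‖x + t i • hk i - x‖ :=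
        hbound _ (by rwa [add_sub_cancel_left]) hdom
    _ = κ * ‖hk i‖ * t i := by
        rw [add_sub_cancel_left, norm_smul, Real.norm_of_nonneg hti.le]; ring
    _ ≤ κ * (‖h‖ + 1) * t i := by gcongr

theorem DirCalmE.aDirSubdiff_subset {f : E → EReal} {x h : E} (hx : x ∈ domE f)
    (hcalm : DirCalmE f x h) : aDirSubdiff f x h ⊆ ⋃ ν ∈ gderivE f x h, dirSubdiff f x h ν := by
  rintro ξ ⟨t, hk, ξk, ht0, ht, hh, hξ, hf, hreg⟩
  have ht0' : ∀ᶠ k in atTop, 0 < t k := Eventually.of_forall ht0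
  set a := (f x).toReal
  set ν : ℕ → ℝ := fun k => ((f (x + t k • hk k)).toReal - a) / t k
  have hdom : ∀ᶠ k in atTop, x + t k • hk k ∈ domE f :=
    (hf.eventually_ne hx.1).and (hf.eventually_ne hx.2)
  have hgraph : ∀ᶠ k in atTop, f (x + t k • hk k) = (a + t k * ν k : ℝ) :=
    hdom.mono fun k hk' => by
      rw [mul_div_cancel₀ _ (ht0 k).ne', add_sub_cancel, EReal.coe_toReal hk'.1 hk'.2]
  -- Calmness bounds the difference quotients, so a subsequence of them converges.
  obtain ⟨C, hC⟩ := hcalm.eventually_abs_sub_le ht0' ht hh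
  have hνC : ∀ᶠ k in atTop, ν k ∈ Metric.closedBall 0 C := by
    filter_upwards [hC, hdom] with k hCk hdk
    rw [mem_closedBall_zero_iff, Real.norm_eq_abs, abs_div, abs_of_pos (ht0 k)]
    exact (div_le_iff₀ (ht0 k)).2 (hCk hdk)
  obtain ⟨ν₀, -, φ, hφ_mono, hνφ⟩ :=
    tendsto_subseq_of_frequently_bounded Metric.isBounded_closedBall hνC.frequently
  have hφ := hφ_mono.tendsto_atTop
  refine mem_biUnion (x := ν₀)
    (mem_gderivE_of_eventually (hφ.eventually ht0') (ht.comp hφ) (hh.comp hφ) hνφ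
      (hφ.eventually hgraph)) ?_
  refine mem_dirNC_of_eventually (hφ.eventually ht0') (ht.comp hφ) (tendsto_mk2 (hh.comp hφ) hνφ)
    (tendsto_mk2 (hξ.comp hφ) tendsto_const_nhds) ?_
  filter_upwards [hφ.eventually hgraph] with k hk'
  rw [mk2_add_smul]
  exact mk2_neg_one_mem_frechetNC_epiE_iff.2 ⟨hk', hreg (φ k)⟩

theorem dirSubdiff_subset_aDirSubdiff {f : E → EReal} {x h : E} (hx : x ∈ domE f) (ν : ℝ) :
    dirSubdiff f x h ν ⊆ aDirSubdiff f x h := by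
  rintro ξ ⟨t, u, ζ, ht0, ht, hu, hζ, hnc⟩
  set a := (f x).toReal
  have hη : Tendsto (fun k => (ζ k).snd) atTop (𝓝 (-1)) :=
    ((WithLp.continuous_snd 2 E ℝ).tendsto _).comp hζ
  -- Rescaling the normals `ζ k = (ξ_k, η_k)` by `(-η_k)⁻¹ > 0` brings them to height `-1`.
  have hsub : ∀ᶠ k in atTop, f (x + t k • (u k).fst) = (a + t k * (u k).snd : ℝ) ∧
      (-(ζ k).snd)⁻¹ • (ζ k).fst ∈ regSubdiff f (x + t k • (u k).fst) := by
    filter_upwards [hη.eventually_lt_const (by norm_num : (-1 : ℝ) < 0)] with k hk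
    have hc : 0 < (-(ζ k).snd)⁻¹ := inv_pos.2 (neg_pos.2 hk)
    have hζk : (-(ζ k).snd)⁻¹ • ζ k = mk2 ((-(ζ k).snd)⁻¹ • (ζ k).fst) (-1 : ℝ) := by
      change _ • mk2 (ζ k).fst (ζ k).snd = _
      rw [smul_mk2, inv_mul_eq_div, div_neg_self hk.ne]
    have := smul_mem_frechetNC hc (hnc k)
    rw [mk2_add_smul, hζk] at this
    exact mk2_neg_one_mem_frechetNC_epiE_iff.1 this
  have hfst : Tendsto (fun k => (u k).fst) atTop (𝓝 h) :=
    ((WithLp.continuous_fst 2 E ℝ).tendsto _).comp hu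
  have hsnd : Tendsto (fun k => (u k).snd) atTop (𝓝 ν) :=
    ((WithLp.continuous_snd 2 E ℝ).tendsto _).comp hu
  refine mem_aDirSubdiff_of_eventually (Eventually.of_forall ht0) ht hfst ?_ ?_
    (hsub.mono fun k hk => hk.2)
  · simpa using (hη.neg.inv₀ (by norm_num)).smul (((WithLp.continuous_fst 2 E ℝ).tendsto _).comp hζ)
  · have hlim : Tendsto (fun k => a + t k * (u k).snd) atTop (𝓝 a) := by
      simpa using tendsto_const_nhds.add (ht.mul hsnd)
    rw [← EReal.coe_toReal hx.1 hx.2]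
    exact (EReal.tendsto_coe.2 hlim).congr' (hsub.mono fun k hk => hk.1.symm)

lemma coe_inv_mul_sub_coe_eq_coe_iff {t : ℝ} (ht : 0 < t) (z : EReal) (a ν : ℝ) :
    ((t⁻¹ : ℝ) : EReal) * (z - a) = ν ↔ z = (a + t * ν : ℝ) := by
  induction z using EReal.rec with
  | bot =>
    rw [EReal.bot_sub, EReal.coe_mul_bot_of_pos (inv_pos.2 ht)]
    exact iff_of_false (EReal.bot_ne_coe ν) (EReal.bot_ne_coe _)
  | top =>
    rw [EReal.top_sub_coe, EReal.coe_mul_top_of_pos (inv_pos.2 ht)]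
    exact iff_of_false (EReal.top_ne_coe ν) (EReal.top_ne_coe _)
  | coe z =>
    rw [← EReal.coe_sub, ← EReal.coe_mul, EReal.coe_eq_coe_iff, EReal.coe_eq_coe_iff,
      inv_mul_eq_iff_eq_mul₀ ht.ne']
    constructor <;> intro h <;> linarith

section DirectionalDerivative

variable {f : E → EReal} {x h : E} {d : ℝ}

lemma HasDirDeriv.tendsto_comp (hd : HasDirDeriv f x h d) {ι : Type*} {l : Filter ι}
    {t : ι → ℝ} {hk : ι → E} (ht0 : ∀ᶠ i in l, 0 < t i) (ht : Tendsto t l (𝓝 0))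
    (hh : Tendsto hk l (𝓝 h)) :
    Tendsto (fun i => ((t i)⁻¹ : ℝ) * (f (x + t i • hk i) - f x) : ι → EReal) l (𝓝 d) :=
  hd.comp ((tendsto_nhdsWithin_iff.2 ⟨ht, ht0⟩).prodMk hh)

lemma HasDirDeriv.gderivE_subset (hx : x ∈ domE f) (hd : HasDirDeriv f x h d) :
    gderivE f x h ⊆ {d} := by
  rintro ν ⟨u, t, hu, ht0, ht, hgraph⟩
  have hquot := hd.tendsto_comp (Eventually.of_forall ht0) ht
    (((WithLp.continuous_fst 2 E ℝ).tendsto _).comp hu)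
  have hq : ∀ k, (((t k)⁻¹ : ℝ) : EReal) * (f (x + t k • (u k).fst) - f x) = (u k).snd := by
    intro k
    have hk := hgraph k
    rw [mk2_add_smul, mk2_mem_graphE] at hk
    rw [← EReal.coe_toReal hx.1 hx.2, coe_inv_mul_sub_coe_eq_coe_iff (ht0 k), hk]
  exact tendsto_nhds_unique (((WithLp.continuous_snd 2 E ℝ).tendsto _).comp hu)
    (EReal.tendsto_coe.1 (hquot.congr hq))

lemma HasDirDeriv.mem_gderivE (hx : x ∈ domE f) (hd : HasDirDeriv f x h d) :
    d ∈ gderivE f x h := by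
  have ht0 : ∀ᶠ k : ℕ in atTop, 0 < 1 / ((k : ℝ) + 1) := Eventually.of_forall fun k => by positivity
  have hquot := hd.tendsto_comp ht0 tendsto_one_div_add_atTop_nhds_zero_nat tendsto_const_nhds
  refine mem_gderivE_of_eventually ht0 tendsto_one_div_add_atTop_nhds_zero_nat tendsto_const_nhds
    ((EReal.tendsto_toReal (EReal.coe_ne_top d) (EReal.coe_ne_bot d)).comp hquot) ?_
  filter_upwards [hquot.eventually_ne (EReal.coe_ne_top d),
    hquot.eventually_ne (EReal.coe_ne_bot d), ht0] with k hne_top hne_bot hk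
  rw [← coe_inv_mul_sub_coe_eq_coe_iff hk, EReal.coe_toReal hx.1 hx.2, Function.comp_apply,
    EReal.coe_toReal hne_top hne_bot]

end DirectionalDerivative

/-- **Corollary 4.1.** Under directional calmness, the analytic directional limiting
subdifferential equals the union over graphical-derivative values of the directional limiting
subdifferentials; under directional differentiability it is a single one. -/
theorem aDirSubdiff_of_calm {n : ℕ} (f : Euc n → EReal) (x : Euc n)
    (hfin : f x ≠ ⊤ ∧ f x ≠ ⊥) (h : Euc n) (hcalm : DirCalmE f x h) :
    (aDirSubdiff f x h = ⋃ ν ∈ gderivE f x h, dirSubdiff f x h ν) ∧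
    (aDirSubdiff f x h = {ξ : Euc n | ∃ ν ∈ gderivE f x h,
      mk2 ξ (-1 : ℝ) ∈ dirNC (epiE f) (mk2 x (f x).toReal) (mk2 h ν)}) ∧
    (∀ d : ℝ, HasDirDeriv f x h d →
      gderivE f x h = {d} ∧ aDirSubdiff f x h = dirSubdiff f x h d) := by
  have hunion : aDirSubdiff f x h = ⋃ ν ∈ gderivE f x h, dirSubdiff f x h ν :=
    (hcalm.aDirSubdiff_subset hfin).antisymm
      (iUnion₂_subset fun ν _ => dirSubdiff_subset_aDirSubdiff hfin ν)
  refine ⟨hunion, ?_, fun d hd => ?_⟩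
  · rw [hunion]
    ext ξ
    simp [dirSubdiff]
  · have hD : gderivE f x h = {d} :=
      (hd.gderivE_subset hfin).antisymm (singleton_subset_iff.2 (hd.mem_gderivE hfin))
    exact ⟨hD, by rw [hunion, hD, biUnion_singleton]⟩

end Paper
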